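/- arXiv:2602.00322 — 5 statements merged into one kernel-verified Lean document; each statement's English description precedes it below -/
import Mathlib

section
/- For r = 1, the Bourgain–Morrey space ℓ^p_{q,1}(ℤ) equals ℓ¹(ℤ) as a set, and the norms ‖·‖_{ℓ^p_{q,1}} and ‖·‖_{ℓ¹} are equivalent: there exist constants c, C > 0 with c‖x‖_{ℓ¹} ≤ ‖x‖_{ℓ^p_{q,1}} ≤ C‖x‖_{ℓ¹} for all x. -/
/-!
The `j = 0` terms of the Bourgain–Morrey sum are exactly the `|x k|`, so `‖x‖_{ℓ¹}` is a lower
bound. Conversely, for `p ≥ 1` each local `ℓ^p` norm is at most the local `ℓ¹` norm, and the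
intervals of one generation `j` partition `ℤ`; hence generation `j` contributes at most
`2^{j(1/q - 1/p)} ‖x‖_{ℓ¹}`, a geometric series that converges because `p < q`.
-/

open scoped ENNReal
open Finset Function

noncomputable section

/-- The dyadic interval `I(j,k) = [2^j k, 2^j (k+1)) ∩ ℤ`. -/
def dyadicI (j : ℕ) (k : ℤ) : Finset ℤ :=
  Finset.Ico ((2 ^ j : ℤ) * k) ((2 ^ j : ℤ) * (k + 1))

/-- The dyadic Bourgain–Morrey norm `‖x‖_{ℓ^p_{q,r}}`. -/
def BMnorm (p q r : ℝ) (x : ℤ → ℝ) : ℝ≥0∞ :=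
  (∑' jk : ℕ × ℤ,
      ((2 : ℝ≥0∞) ^ jk.1) ^ (r * (1 / q - 1 / p)) *
        (∑ l ∈ dyadicI jk.1 jk.2, ENNReal.ofReal (|x l| ^ p)) ^ (r / p)) ^ (1 / r)

/-- The classical `ℓ^r` norm of a sequence on `ℤ`. -/
def lNorm (r : ℝ) (x : ℤ → ℝ) : ℝ≥0∞ :=
  (∑' k : ℤ, ENNReal.ofReal (|x k| ^ r)) ^ (1 / r)

end

lemma mem_dyadicI {j : ℕ} {k l : ℤ} : l ∈ dyadicI j k ↔ l / 2 ^ j = k := by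
  have h2 : (0 : ℤ) < 2 ^ j := by positivity
  rw [dyadicI, Finset.mem_Ico, le_antisymm_iff, ← Int.lt_add_one_iff (a := l / 2 ^ j),
    Int.ediv_lt_iff_lt_mul h2, Int.le_ediv_iff_mul_le h2, mul_comm k, mul_comm (k + 1), and_comm]

lemma dyadicI_zero (k : ℤ) : dyadicI 0 k = {k} := by
  ext l; simp [mem_dyadicI]

lemma coe_dyadicI (j : ℕ) (k : ℤ) : (dyadicI j k : Set ℤ) = (· / 2 ^ j) ⁻¹' {k} := by
  ext l; simp [mem_dyadicI]

lemma tsum_sum_dyadicI (j : ℕ) (f : ℤ → ℝ≥0∞) :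
    ∑' k, ∑ l ∈ dyadicI j k, f l = ∑' l, f l := by
  rw [← ENNReal.tsum_fiberwise f (· / 2 ^ j)]
  congr! with k
  rw [← Finset.tsum_subtype, ← coe_dyadicI]
  rfl

namespace ENNReal

lemma sum_rpow_le_rpow_sum {ι : Type*} (s : Finset ι) (f : ι → ℝ≥0∞) {p : ℝ} (hp : 1 ≤ p) :
    ∑ i ∈ s, f i ^ p ≤ (∑ i ∈ s, f i) ^ p := by
  classical
  induction s using Finset.induction with
  | empty => simp [zero_rpow_of_pos (zero_lt_one.trans_le hp)]
  | insert i s hi ih =>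
    rw [sum_insert hi, sum_insert hi]
    exact (add_le_add_right ih _).trans (add_rpow_le_rpow_add _ _ hp)

lemma rpow_sum_rpow_le_sum {ι : Type*} (s : Finset ι) (f : ι → ℝ≥0∞) {p : ℝ} (hp : 1 ≤ p) :
    (∑ i ∈ s, f i ^ p) ^ (1 / p) ≤ ∑ i ∈ s, f i := by
  have hp0 : 0 < p := zero_lt_one.trans_le hp
  calc (∑ i ∈ s, f i ^ p) ^ (1 / p) ≤ ((∑ i ∈ s, f i) ^ p) ^ (1 / p) :=
        rpow_le_rpow (sum_rpow_le_rpow_sum s f hp) (by positivity)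
    _ = ∑ i ∈ s, f i := by rw [one_div, rpow_rpow_inv hp0.ne']

lemma tsum_two_pow_rpow (e : ℝ) : ∑' j : ℕ, ((2 : ℝ≥0∞) ^ j) ^ e = (1 - 2 ^ e)⁻¹ := by
  simp_rw [← rpow_natCast, ← rpow_mul, mul_comm _ e, rpow_mul, rpow_natCast, tsum_geometric]

end ENNReal

section BMnorm

variable {p : ℝ} (q : ℝ) (x : ℤ → ℝ)

lemma BMnorm_one : BMnorm p q 1 x = ∑' (j : ℕ) (k : ℤ), ((2 : ℝ≥0∞) ^ j) ^ (1 / q - 1 / p) *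
      (∑ l ∈ dyadicI j k, ENNReal.ofReal (|x l| ^ p)) ^ (1 / p) := by
  simp only [BMnorm, one_mul, div_one, ENNReal.rpow_one]
  exact ENNReal.tsum_prod'

lemma tsum_ofReal_abs_le_BMnorm_one (hp : 0 < p) :
    ∑' k : ℤ, ENNReal.ofReal |x k| ≤ BMnorm p q 1 x := by
  rw [BMnorm_one]
  refine le_of_eq_of_le (tsum_congr fun k ↦ ?_) (ENNReal.le_tsum 0)
  rw [dyadicI_zero, sum_singleton, pow_zero, ENNReal.one_rpow, one_mul,
    ← ENNReal.ofReal_rpow_of_nonneg (abs_nonneg _) hp.le, one_div, ENNReal.rpow_rpow_inv hp.ne']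

lemma BMnorm_one_le (hp : 1 ≤ p) :
    BMnorm p q 1 x ≤
      (∑' j : ℕ, ((2 : ℝ≥0∞) ^ j) ^ (1 / q - 1 / p)) * ∑' k : ℤ, ENNReal.ofReal |x k| := by
  have hp0 : 0 < p := zero_lt_one.trans_le hp
  rw [BMnorm_one, ← ENNReal.tsum_mul_right]
  refine ENNReal.tsum_le_tsum fun j ↦ ?_
  rw [← tsum_sum_dyadicI j (fun l ↦ ENNReal.ofReal |x l|), ← ENNReal.tsum_mul_left]
  refine ENNReal.tsum_le_tsum fun k ↦ mul_le_mul_right ?_ _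
  simp_rw [← ENNReal.ofReal_rpow_of_nonneg (abs_nonneg _) hp0.le]
  exact ENNReal.rpow_sum_rpow_le_sum _ _ hp

end BMnorm

/-- For `r = 1` the Bourgain–Morrey space coincides with `ℓ¹(ℤ)`, with
equivalent norms. -/
theorem BMnorm_r_eq_one (p q : ℝ) (hp : 1 ≤ p) (hpq : p < q) :
    ∃ c C : ℝ≥0∞, 0 < c ∧ 0 < C ∧ C ≠ ⊤ ∧
      ∀ x : ℤ → ℝ,
        c * (∑' k : ℤ, ENNReal.ofReal |x k|) ≤ BMnorm p q 1 x ∧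
        BMnorm p q 1 x ≤ C * (∑' k : ℤ, ENNReal.ofReal |x k|) := by
  have hp0 : 0 < p := zero_lt_one.trans_le hp
  have hexp : 1 / q - 1 / p < 0 := sub_neg.2 (one_div_lt_one_div_of_lt hp0 hpq)
  have hratio : (2 : ℝ≥0∞) ^ (1 / q - 1 / p) < 1 :=
    ENNReal.rpow_lt_one_of_one_lt_of_neg (by norm_num) hexp
  refine ⟨1, (1 - 2 ^ (1 / q - 1 / p))⁻¹, one_pos,
    ENNReal.inv_pos.2 (ENNReal.sub_ne_top ENNReal.one_ne_top),
    ENNReal.inv_ne_top.2 (tsub_pos_of_lt hratio).ne', fun x ↦ ⟨?_, ?_⟩⟩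
  · rw [one_mul]
    exact tsum_ofReal_abs_le_BMnorm_one q x hp0
  · rw [← ENNReal.tsum_two_pow_rpow]
    exact BMnorm_one_le q x hp
end

section
/- For 1 ≤ p < q < ∞ and 1 < r < ∞, the sequence x(k) = 1/k for k ≥ 1 and x(k) = 0 otherwise satisfies ‖x‖_{ℓ^p_{q,r}} < ∞ but x ∉ ℓ¹(ℤ); hence the inclusion ℓ¹ ⊂ ℓ^p_{q,r} is proper. -/
open scoped ENNReal
open Finset Function

namespace BMaux

noncomputable def xseq : ℤ → ℝ := fun k => if 1 ≤ k then ((k : ℝ))⁻¹ else 0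

lemma two_pow_pos' (j : ℕ) : (0:ℤ) < 2 ^ j := by positivity

lemma one_le_two_pow' (j : ℕ) : (1:ℤ) ≤ 2 ^ j := by
  have := two_pow_pos' j; omega

lemma sum_Ico_split {a b c : ℤ} (f : ℤ → ℝ≥0∞) (hab : a ≤ b) (hbc : b ≤ c) :
    ∑ l ∈ Finset.Ico a c, f l = ∑ l ∈ Finset.Ico a b, f l + ∑ l ∈ Finset.Ico b c, f l := by
  rw [← Finset.sum_union (Finset.Ico_disjoint_Ico_consecutive a b c),
    Finset.Ico_union_Ico_eq_Ico hab hbc]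

lemma harm (j : ℕ) :
    ∑ l ∈ Finset.Ico (1:ℤ) (2 ^ j), ENNReal.ofReal ((l:ℝ)⁻¹) ≤ (j : ℝ≥0∞) := by
  induction j with
  | zero => simp
  | succ j ih =>
    have h1 : (1:ℤ) ≤ 2 ^ j := one_le_two_pow' j
    have hpos := two_pow_pos' j
    have h2 : (2:ℤ) ^ j ≤ 2 ^ (j+1) := by
      have : (2:ℤ)^(j+1) = 2^j + 2^j := by ring
      omega
    rw [sum_Ico_split _ h1 h2]
    have hblock : ∑ l ∈ Finset.Ico ((2:ℤ)^j) (2^(j+1)), ENNReal.ofReal ((l:ℝ)⁻¹) ≤ 1 := by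
      have hcard : (Finset.Ico ((2:ℤ)^j) (2^(j+1))).card = 2^j := by
        rw [Int.card_Ico]
        have h3 : (2:ℤ)^(j+1) - 2^j = ((2^j : ℕ) : ℤ) := by push_cast; ring
        rw [h3, Int.toNat_natCast]
      calc ∑ l ∈ Finset.Ico ((2:ℤ)^j) (2^(j+1)), ENNReal.ofReal ((l:ℝ)⁻¹)
          ≤ (Finset.Ico ((2:ℤ)^j) (2^(j+1))).card • ENNReal.ofReal (((2:ℝ)^j)⁻¹) := by
            apply Finset.sum_le_card_nsmul
            intro l hl
            simp only [Finset.mem_Ico] at hl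
            apply ENNReal.ofReal_le_ofReal
            have hl1 : ((2:ℝ)^j) ≤ (l:ℝ) := by exact_mod_cast hl.1
            gcongr
        _ = 1 := by
            rw [hcard, nsmul_eq_mul]
            rw [ENNReal.ofReal_inv_of_pos (by positivity)]
            rw [ENNReal.ofReal_pow (by norm_num), ENNReal.ofReal_ofNat]
            push_cast
            exact ENNReal.mul_inv_cancel (by positivity) (by simp)
    calc ∑ l ∈ Finset.Ico (1:ℤ) (2^j), ENNReal.ofReal ((l:ℝ)⁻¹)
          + ∑ l ∈ Finset.Ico ((2:ℤ)^j) (2^(j+1)), ENNReal.ofReal ((l:ℝ)⁻¹)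
        ≤ (j : ℝ≥0∞) + 1 := add_le_add ih hblock
      _ = ((j+1 : ℕ) : ℝ≥0∞) := by push_cast; ring

lemma inner_neg {p : ℝ} (hp : 1 ≤ p) (j : ℕ) {k : ℤ} (hk : k < 0) :
    ∑ l ∈ dyadicI j k, ENNReal.ofReal (|xseq l| ^ p) = 0 := by
  apply Finset.sum_eq_zero
  intro l hl
  simp only [dyadicI, Finset.mem_Ico] at hl
  have hneg : (2:ℤ)^j * (k+1) ≤ 0 :=
    mul_nonpos_of_nonneg_of_nonpos (le_of_lt (two_pow_pos' j)) (by omega)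
  have : ¬ (1 ≤ l) := by omega
  rw [xseq, if_neg this, abs_zero, Real.zero_rpow (by linarith), ENNReal.ofReal_zero]

lemma inner_zero {p : ℝ} (hp : 1 ≤ p) (j : ℕ) :
    ∑ l ∈ dyadicI j 0, ENNReal.ofReal (|xseq l| ^ p) ≤ (j : ℝ≥0∞) := by
  have h1 : (1:ℤ) ≤ 2 ^ j := one_le_two_pow' j
  have hI : dyadicI j 0 = Finset.Ico (0:ℤ) (2^j) := by
    rw [dyadicI]; norm_num
  rw [hI, sum_Ico_split _ (by norm_num : (0:ℤ) ≤ 1) h1]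
  have hz : ∑ l ∈ Finset.Ico (0:ℤ) 1, ENNReal.ofReal (|xseq l| ^ p) = 0 := by
    rw [show Finset.Ico (0:ℤ) 1 = {0} from rfl]
    simp [xseq, Real.zero_rpow (by linarith : p ≠ 0)]
  rw [hz, zero_add]
  calc ∑ l ∈ Finset.Ico (1:ℤ) (2^j), ENNReal.ofReal (|xseq l| ^ p)
      ≤ ∑ l ∈ Finset.Ico (1:ℤ) (2^j), ENNReal.ofReal ((l:ℝ)⁻¹) := by
        apply Finset.sum_le_sum
        intro l hl
        simp only [Finset.mem_Ico] at hl
        have hl1 : 1 ≤ l := hl.1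
        have hl1' : (1:ℝ) ≤ (l:ℝ) := by exact_mod_cast hl1
        apply ENNReal.ofReal_le_ofReal
        rw [xseq, if_pos hl1, abs_of_nonneg (by positivity)]
        calc ((l:ℝ)⁻¹) ^ p ≤ ((l:ℝ)⁻¹) ^ (1:ℝ) :=
              Real.rpow_le_rpow_of_exponent_ge (by positivity) (by
                rw [inv_le_one_iff₀]; right; linarith) hp
          _ = (l:ℝ)⁻¹ := Real.rpow_one _
    _ ≤ (j : ℝ≥0∞) := harm j

lemma inner_pos {p : ℝ} (hp : 1 ≤ p) (j : ℕ) {k : ℤ} (hk : 1 ≤ k) :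
    ∑ l ∈ dyadicI j k, ENNReal.ofReal (|xseq l| ^ p)
      ≤ (2:ℝ≥0∞)^j * ENNReal.ofReal (((((2:ℤ)^j * k : ℤ) : ℝ))⁻¹ ^ p) := by
  have hM : (0:ℤ) < 2^j * k := mul_pos (two_pow_pos' j) (by omega)
  calc ∑ l ∈ dyadicI j k, ENNReal.ofReal (|xseq l| ^ p)
      ≤ (dyadicI j k).card • ENNReal.ofReal (((((2:ℤ)^j * k : ℤ) : ℝ))⁻¹ ^ p) := by
        apply Finset.sum_le_card_nsmul
        intro l hl
        simp only [dyadicI, Finset.mem_Ico] at hl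
        have hl1 : 1 ≤ l := le_trans hM hl.1
        apply ENNReal.ofReal_le_ofReal
        rw [xseq, if_pos hl1, abs_of_nonneg (by positivity)]
        apply Real.rpow_le_rpow (by positivity) _ (by linarith)
        have h1 : ((2^j * k : ℤ):ℝ) ≤ (l:ℝ) := by exact_mod_cast hl.1
        have h2 : (0:ℝ) < ((2^j * k : ℤ):ℝ) := by exact_mod_cast hM
        gcongr
    _ = (2:ℝ≥0∞)^j * ENNReal.ofReal (((((2:ℤ)^j * k : ℤ) : ℝ))⁻¹ ^ p) := by
        have hcard : (dyadicI j k).card = 2^j := by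
          rw [dyadicI, Int.card_Ico]
          have h3 : (2:ℤ)^j * (k+1) - 2^j * k = ((2^j : ℕ) : ℤ) := by push_cast; ring
          rw [h3, Int.toNat_natCast]
        rw [hcard, nsmul_eq_mul]
        push_cast
        ring

lemma real_id {p r δ T : ℝ} (hp0 : 0 < p) (hT : 0 < T) (j : ℕ) :
    (2:ℝ)^((j:ℝ)*δ) * ((2:ℝ)^j * (((2:ℝ)^j * T)⁻¹)^p)^(r/p)
      = (2:ℝ)^((j:ℝ)*(δ + r/p - r)) * T⁻¹^r := by
  have hY : (0:ℝ) < ((2:ℝ)^j * T)⁻¹ := by positivity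
  have hX : (0:ℝ) < (2:ℝ)^j * (((2:ℝ)^j * T)⁻¹)^p := by positivity
  have hL : (0:ℝ) < (2:ℝ)^((j:ℝ)*δ) * ((2:ℝ)^j * (((2:ℝ)^j * T)⁻¹)^p)^(r/p) := by positivity
  have hR : (0:ℝ) < (2:ℝ)^((j:ℝ)*(δ + r/p - r)) * T⁻¹^r := by positivity
  rw [← Real.exp_log hL, ← Real.exp_log hR]
  congr 1
  have e0 : Real.log (((2:ℝ)^j * T)⁻¹) = -((j:ℝ) * Real.log 2 + Real.log T) := by
    rw [Real.log_inv, Real.log_mul (by positivity) hT.ne', Real.log_pow]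
  have e1 : Real.log ((2:ℝ)^j * (((2:ℝ)^j * T)⁻¹)^p)
      = (j:ℝ) * Real.log 2 + p * Real.log (((2:ℝ)^j * T)⁻¹) := by
    rw [Real.log_mul (by positivity) (by positivity), Real.log_pow, Real.log_rpow hY]
  have hc : r / p * p = r := div_mul_cancel₀ r hp0.ne'
  have hL1 : (0:ℝ) < (2:ℝ)^((j:ℝ)*δ) := by positivity
  have hL2 : (0:ℝ) < ((2:ℝ)^j * (((2:ℝ)^j * T)⁻¹)^p) ^ (r/p) := by positivity
  have hR1 : (0:ℝ) < (2:ℝ)^((j:ℝ)*(δ + r/p - r)) := by positivity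
  have hR2 : (0:ℝ) < T⁻¹ ^ r := by positivity
  rw [Real.log_mul hL1.ne' hL2.ne', Real.log_mul hR1.ne' hR2.ne']
  rw [Real.log_rpow (by norm_num : (0:ℝ) < 2), Real.log_rpow (by norm_num : (0:ℝ) < 2)]
  rw [Real.log_rpow hX, Real.log_rpow (inv_pos.2 hT)]
  rw [e1, e0, Real.log_inv]
  linear_combination (-((j:ℝ) * Real.log 2 + Real.log T)) * hc

lemma pow_rpow (j : ℕ) (t : ℝ) :
    ((2:ℝ≥0∞)^j)^t = ENNReal.ofReal ((2:ℝ)^((j:ℝ)*t)) := by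
  rw [← ENNReal.rpow_natCast 2 j, ← ENNReal.rpow_mul]
  rw [show (2:ℝ≥0∞) = ENNReal.ofReal 2 from (ENNReal.ofReal_ofNat 2).symm]
  rw [ENNReal.ofReal_rpow_of_pos (by norm_num)]

lemma two_pow_ennreal (j : ℕ) : (2:ℝ≥0∞)^j = ENNReal.ofReal ((2:ℝ)^j) := by
  rw [ENNReal.ofReal_pow (by norm_num), ENNReal.ofReal_ofNat]

lemma term_pos {p r δ : ℝ} (hp : 1 ≤ p) (hr0 : 0 < r) (j : ℕ) {k : ℤ} (hk : 1 ≤ k) :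
    ((2:ℝ≥0∞)^j)^δ * (∑ l ∈ dyadicI j k, ENNReal.ofReal (|xseq l| ^ p))^(r/p)
      ≤ ENNReal.ofReal ((2:ℝ)^((j:ℝ)*(δ + r/p - r))) * ENNReal.ofReal (((k:ℝ))⁻¹ ^ r) := by
  have hp0 : (0:ℝ) < p := lt_of_lt_of_le one_pos hp
  have hrp : (0:ℝ) ≤ r / p := by positivity
  have hkR : (0:ℝ) < (k:ℝ) := by exact_mod_cast (by omega : (0:ℤ) < k)
  have step := ENNReal.rpow_le_rpow (inner_pos hp j hk) hrp
  calc ((2:ℝ≥0∞)^j)^δ * (∑ l ∈ dyadicI j k, ENNReal.ofReal (|xseq l| ^ p))^(r/p)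
      ≤ ((2:ℝ≥0∞)^j)^δ *
          ((2:ℝ≥0∞)^j * ENNReal.ofReal (((((2:ℤ)^j * k : ℤ) : ℝ))⁻¹ ^ p))^(r/p) :=
        mul_le_mul_right step _
    _ = ENNReal.ofReal ((2:ℝ)^((j:ℝ)*(δ + r/p - r))) * ENNReal.ofReal (((k:ℝ))⁻¹ ^ r) := by
        have hcast : (((2:ℤ)^j * k : ℤ):ℝ) = (2:ℝ)^j * (k:ℝ) := by push_cast; ring
        rw [hcast, pow_rpow, two_pow_ennreal]
        rw [← ENNReal.ofReal_mul (by positivity),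
          ENNReal.ofReal_rpow_of_pos (by positivity),
          ← ENNReal.ofReal_mul (by positivity),
          ← ENNReal.ofReal_mul (by positivity)]
        exact congrArg ENNReal.ofReal (real_id hp0 hkR j)

lemma term_zero {p r δ : ℝ} (hp : 1 ≤ p) (hr0 : 0 < r) (j : ℕ) :
    ((2:ℝ≥0∞)^j)^δ * (∑ l ∈ dyadicI j 0, ENNReal.ofReal (|xseq l| ^ p))^(r/p)
      ≤ ENNReal.ofReal ((2:ℝ)^((j:ℝ)*δ) * (j:ℝ)^(r/p)) := by
  have hp0 : (0:ℝ) < p := lt_of_lt_of_le one_pos hp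
  have hrp : (0:ℝ) ≤ r / p := by positivity
  have step := ENNReal.rpow_le_rpow (inner_zero hp j) hrp
  calc ((2:ℝ≥0∞)^j)^δ * (∑ l ∈ dyadicI j 0, ENNReal.ofReal (|xseq l| ^ p))^(r/p)
      ≤ ((2:ℝ≥0∞)^j)^δ * ((j:ℝ≥0∞))^(r/p) := mul_le_mul_right step _
    _ = ENNReal.ofReal ((2:ℝ)^((j:ℝ)*δ) * (j:ℝ)^(r/p)) := by
        rw [pow_rpow, ← ENNReal.ofReal_natCast j,
          ENNReal.ofReal_rpow_of_nonneg (Nat.cast_nonneg j) hrp,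
          ← ENNReal.ofReal_mul (by positivity)]

lemma tsum_int_of_supp (h : ℤ → ℝ≥0∞) (h0 : ∀ k : ℤ, k < 0 → h k = 0) :
    ∑' k : ℤ, h k = ∑' n : ℕ, h (n : ℤ) := by
  symm
  apply Function.Injective.tsum_eq (fun a b hab => by exact_mod_cast hab)
  intro k hk
  rcases le_or_gt 0 k with h1 | h1
  · exact ⟨k.toNat, Int.toNat_of_nonneg h1⟩
  · exact absurd (h0 k h1) hk

lemma tsum_ofReal_ne_top {f : ℕ → ℝ} (hnn : ∀ n, 0 ≤ f n) (hs : Summable f) :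
    ∑' n, ENNReal.ofReal (f n) ≠ ⊤ := by
  rw [← ENNReal.ofReal_tsum_of_nonneg hnn hs]; exact ENNReal.ofReal_ne_top

lemma summable_u {c s : ℝ} (hc0 : 0 ≤ c) (hc1 : c < 1) (hs : 0 < s) :
    Summable (fun j : ℕ => c^j * (j:ℝ)^s) := by
  have hgeo := summable_pow_mul_geometric_of_norm_lt_one (R := ℝ) ⌈s⌉₊
    (by rwa [Real.norm_eq_abs, abs_of_nonneg hc0])
  apply Summable.of_nonneg_of_le (fun j => by positivity) (fun j => ?_) hgeo
  rcases Nat.eq_zero_or_pos j with hj | hj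
  · subst hj
    simp [Real.zero_rpow hs.ne']
  · have h1 : (1:ℝ) ≤ (j:ℝ) := by exact_mod_cast hj
    rw [mul_comm]
    apply mul_le_mul_of_nonneg_right _ (by positivity)
    calc (j:ℝ)^s ≤ (j:ℝ)^((⌈s⌉₊:ℕ):ℝ) := Real.rpow_le_rpow_of_exponent_le h1 (Nat.le_ceil s)
      _ = (j:ℝ)^(⌈s⌉₊:ℕ) := Real.rpow_natCast _ _

noncomputable def gfun (D E r p : ℝ) (j : ℕ) (k : ℤ) : ℝ≥0∞ :=
  if k = 0 then ENNReal.ofReal ((2:ℝ)^((j:ℝ)*D) * (j:ℝ)^(r/p))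
  else if 1 ≤ k then
    ENNReal.ofReal ((2:ℝ)^((j:ℝ)*E)) * ENNReal.ofReal (((k:ℝ))⁻¹ ^ r)
  else 0

lemma gfun_neg (D E r p : ℝ) (j : ℕ) {k : ℤ} (hk : k < 0) : gfun D E r p j k = 0 := by
  rw [gfun, if_neg (by omega), if_neg (by omega)]

lemma gfun_zero (D E r p : ℝ) (j : ℕ) :
    gfun D E r p j 0 = ENNReal.ofReal ((2:ℝ)^((j:ℝ)*D) * (j:ℝ)^(r/p)) := by
  rw [gfun, if_pos rfl]

lemma gfun_pos (D E r p : ℝ) (j : ℕ) {k : ℤ} (hk : 1 ≤ k) :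
    gfun D E r p j k
      = ENNReal.ofReal ((2:ℝ)^((j:ℝ)*E)) * ENNReal.ofReal (((k:ℝ))⁻¹ ^ r) := by
  rw [gfun, if_neg (by omega), if_pos hk]

end BMaux

/-- For `1 ≤ p < q < ∞` and `1 < r < ∞`, the sequence `x(k) = 1/k` for `k ≥ 1`
(and `0` otherwise) lies in `ℓ^p_{q,r} \ ℓ¹`: the inclusion `ℓ¹ ⊂ ℓ^p_{q,r}` is proper. -/
theorem BMspace_properly_contains_l1 (p q r : ℝ) (hp : 1 ≤ p) (hpq : p < q)
    (hr : 1 < r) :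
    BMnorm p q r (fun k : ℤ => if 1 ≤ k then ((k : ℝ))⁻¹ else 0) ≠ ⊤ ∧
    ¬ Summable (fun k : ℤ => |if 1 ≤ k then ((k : ℝ))⁻¹ else 0|) := by
  have hp0 : (0:ℝ) < p := lt_of_lt_of_le one_pos hp
  have hq1 : (1:ℝ) < q := lt_of_le_of_lt hp hpq
  have hq0 : (0:ℝ) < q := lt_trans one_pos hq1
  have hr0 : (0:ℝ) < r := lt_trans one_pos hr
  constructor
  · -- finiteness of the BM norm
    set D : ℝ := r * (1/q - 1/p) with hD
    set E : ℝ := D + r/p - r with hEdef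
    have hDneg : D < 0 := by
      have h1 : 1/q < 1/p := one_div_lt_one_div_of_lt hp0 hpq
      have : 1/q - 1/p < 0 := by linarith
      exact mul_neg_of_pos_of_neg hr0 this
    have hEval : E = r/q - r := by rw [hEdef, hD]; ring
    have hEneg : E < 0 := by
      rw [hEval]
      have := div_lt_self hr0 hq1
      linarith
    have hxx : BMnorm p q r (fun k : ℤ => if 1 ≤ k then ((k : ℝ))⁻¹ else 0)
        = BMnorm p q r BMaux.xseq := rfl
    rw [hxx, BMnorm]
    apply ENNReal.rpow_ne_top_of_nonneg (by positivity)
    -- the bounding function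
    have hle : ∀ jk : ℕ × ℤ,
        ((2 : ℝ≥0∞) ^ jk.1) ^ (r * (1 / q - 1 / p)) *
          (∑ l ∈ dyadicI jk.1 jk.2, ENNReal.ofReal (|BMaux.xseq l| ^ p)) ^ (r / p)
          ≤ BMaux.gfun D E r p jk.1 jk.2 := by
      rintro ⟨j, k⟩
      rcases lt_trichotomy k 0 with hk | hk | hk
      · rw [BMaux.gfun_neg D E r p j hk]
        rw [BMaux.inner_neg hp j hk, ENNReal.zero_rpow_of_pos (by positivity), mul_zero]
      · subst hk
        rw [BMaux.gfun_zero]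
        exact BMaux.term_zero hp hr0 j
      · rw [BMaux.gfun_pos D E r p j (by omega)]
        exact BMaux.term_pos hp hr0 j (by omega)
    apply ne_top_of_le_ne_top _ (ENNReal.tsum_le_tsum hle)
    -- the bound is finite
    rw [ENNReal.tsum_prod]
    set T : ℝ≥0∞ := ∑' n : ℕ, ENNReal.ofReal (((n:ℝ)+1)⁻¹ ^ r) with hT
    have hline : ∀ j : ℕ, ∑' k : ℤ, BMaux.gfun D E r p j k
        = ENNReal.ofReal ((2:ℝ)^((j:ℝ)*D) * (j:ℝ)^(r/p))
          + ENNReal.ofReal ((2:ℝ)^((j:ℝ)*E)) * T := by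
      intro j
      rw [BMaux.tsum_int_of_supp (BMaux.gfun D E r p j)
        (fun k hk => BMaux.gfun_neg D E r p j hk)]
      rw [tsum_eq_zero_add' ENNReal.summable]
      congr 1
      · have hval : ∀ n : ℕ, BMaux.gfun D E r p j ((n + 1 : ℕ) : ℤ)
            = ENNReal.ofReal ((2:ℝ)^((j:ℝ)*E)) * ENNReal.ofReal (((n:ℝ)+1)⁻¹ ^ r) := by
          intro n
          rw [BMaux.gfun_pos D E r p j (by omega)]
          norm_num
        rw [tsum_congr hval, ENNReal.tsum_mul_left]
    rw [tsum_congr hline, ENNReal.tsum_add, ENNReal.tsum_mul_right]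
    rw [ENNReal.add_ne_top]
    constructor
    · -- ∑ 2^(jD) j^(r/p) < ∞
      apply BMaux.tsum_ofReal_ne_top (fun j => by positivity)
      have heq : ∀ j : ℕ, (2:ℝ)^((j:ℝ)*D) * (j:ℝ)^(r/p) = ((2:ℝ)^D)^j * (j:ℝ)^(r/p) := by
        intro j
        rw [mul_comm (j:ℝ) D, Real.rpow_mul (by norm_num : (0:ℝ) ≤ 2), Real.rpow_natCast]
      exact Summable.congr
        (BMaux.summable_u (Real.rpow_nonneg (by norm_num) D)
          (Real.rpow_lt_one_of_one_lt_of_neg one_lt_two hDneg) (by positivity))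
        (fun j => (heq j).symm)
    · apply ENNReal.mul_ne_top
      · -- geometric series
        apply BMaux.tsum_ofReal_ne_top (fun j => by positivity)
        have heq : ∀ j : ℕ, (2:ℝ)^((j:ℝ)*E) = ((2:ℝ)^E)^j := by
          intro j
          rw [mul_comm (j:ℝ) E, Real.rpow_mul (by norm_num : (0:ℝ) ≤ 2), Real.rpow_natCast]
        exact Summable.congr
          (summable_geometric_of_lt_one (Real.rpow_nonneg (by norm_num) E)
            (Real.rpow_lt_one_of_one_lt_of_neg one_lt_two hEneg))
          (fun j => (heq j).symm)
      · -- tail of ζ(r)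
        apply BMaux.tsum_ofReal_ne_top (fun n => by positivity)
        have base : Summable (fun n : ℕ => ((n:ℝ)^r)⁻¹) := Real.summable_nat_rpow_inv.mpr hr
        have shift := (summable_nat_add_iff 1).mpr base
        apply Summable.congr shift
        intro n
        have hcast : (((n + 1 : ℕ)):ℝ) = (n:ℝ) + 1 := by push_cast; ring
        rw [hcast, Real.inv_rpow (by positivity)]
  · -- harmonic series diverges
    intro h
    have hinj : Function.Injective (fun n : ℕ => (n:ℤ) + 1) := fun a b hab => by
      simp only at hab; omega
    have h2 := h.comp_injective hinj
    have h3 : Summable (fun n : ℕ => ((n:ℝ) + 1)⁻¹) := by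
      apply Summable.congr h2
      intro n
      simp only [Function.comp]
      rw [if_pos (by omega : (1:ℤ) ≤ (n:ℤ) + 1)]
      rw [abs_of_nonneg (by positivity)]
      push_cast
      ring
    have h4 : Summable (fun n : ℕ => (((n + 1 : ℕ)):ℝ)⁻¹) := by
      apply Summable.congr h3
      intro n
      push_cast
      ring
    exact Real.not_summable_natCast_inv ((summable_nat_add_iff 1).mp h4)
end

section
/- Let 1 ≤ p < q < ∞, 1 < r < ∞ with r > q, and choose s with q ≤ s < r. The sequence x_s(k) = |k|^{−1/s} for k ≠ 0, x_s(0) = 0, belongs to ℓ^r(ℤ) but ‖x_s‖_{ℓ^p_{q,r}} = ∞; hence the inclusion ℓ^p_{q,r} ⊂ ℓ^r is proper when r > q. -/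
open scoped ENNReal
open Finset Function

/-- For `r > q` and `q ≤ s < r`, the sequence `x_s(k) = |k|^{-1/s}` (with `x_s(0)=0`)
belongs to `ℓ^r(ℤ)` but not to `ℓ^p_{q,r}(ℤ)`: the inclusion `ℓ^p_{q,r} ⊂ ℓ^r` is proper. -/
theorem lr_properly_contains_BMspace (p q r s : ℝ) (hp : 1 ≤ p) (hpq : p < q)
    (hqr : q < r) (hqs : q ≤ s) (hsr : s < r) :
    Summable (fun k : ℤ => |if k = 0 then (0 : ℝ) else |(k : ℝ)| ^ (-(1 / s))| ^ r) ∧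
    BMnorm p q r (fun k : ℤ => if k = 0 then (0 : ℝ) else |(k : ℝ)| ^ (-(1 / s))) = ⊤ := by
  have hp0 : (0:ℝ) < p := by linarith
  have hq0 : (0:ℝ) < q := by linarith
  have hs0 : (0:ℝ) < s := by linarith
  have hr0 : (0:ℝ) < r := by linarith
  constructor
  · -- summability in ℓ^r
    have hrs : 1 < r / s := (one_lt_div hs0).2 hsr
    refine (Real.summable_abs_int_rpow hrs).congr fun k => ?_
    by_cases hk : k = 0
    · simp [hk, Real.zero_rpow (neg_ne_zero.2 (by positivity : r/s ≠ 0)),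
        Real.zero_rpow hr0.ne']
    · rw [if_neg hk, abs_of_nonneg (Real.rpow_nonneg (abs_nonneg _) _),
        ← Real.rpow_mul (abs_nonneg _)]
      congr 1
      ring
  · -- BMnorm is infinite
    set x : ℤ → ℝ := fun k => if k = 0 then (0 : ℝ) else |(k : ℝ)| ^ (-(1 / s)) with hx
    set f : ℕ × ℤ → ℝ≥0∞ := fun jk =>
      ((2 : ℝ≥0∞) ^ jk.1) ^ (r * (1 / q - 1 / p)) *
        (∑ l ∈ dyadicI jk.1 jk.2, ENNReal.ofReal (|x l| ^ p)) ^ (r / p) with hf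
    have h2 : (2:ℝ≥0∞) ≠ 0 := two_ne_zero
    have h2t : (2:ℝ≥0∞) ≠ ⊤ := ENNReal.ofNat_ne_top
    have pow_add : ∀ a b : ℝ, ((2:ℝ≥0∞)^a) * (2^b) = 2^(a+b) :=
      fun a b => (ENNReal.rpow_add a b h2 h2t).symm
    have key : ∀ j : ℕ, (2:ℝ≥0∞) ^ (-(r/s)) ≤ f (j, 1) := by
      intro j
      -- lower bound each term of the inner sum
      have hterm : ∀ l ∈ dyadicI j 1,
          ((2:ℝ≥0∞) ^ ((j:ℝ)+1)) ^ (-(p/s)) ≤ ENNReal.ofReal (|x l| ^ p) := by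
        intro l hl
        simp only [dyadicI, Finset.mem_Ico, mul_one] at hl
        have h1l : (1:ℤ) ≤ l := le_trans (one_le_pow₀ (by norm_num)) hl.1
        have hlR : (1:ℝ) ≤ (l:ℝ) := by exact_mod_cast h1l
        have hlpos : (0:ℝ) < (l:ℝ) := by linarith
        have hub : (l:ℝ) ≤ 2 ^ ((j:ℝ)+1) := by
          have : (l:ℝ) + 1 ≤ (2:ℝ)^j * 2 := by exact_mod_cast hl.2
          have h2j : (2:ℝ)^j * 2 = 2 ^ ((j:ℝ)+1) := by
            rw [Real.rpow_add (by norm_num), Real.rpow_natCast, Real.rpow_one]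
          linarith [h2j ▸ this]
        have hne : l ≠ 0 := by omega
        have hxl : |x l| ^ p = (l:ℝ) ^ (-(1/s) * p) := by
          rw [hx]
          simp only [if_neg hne, abs_of_pos hlpos,
            abs_of_nonneg (Real.rpow_nonneg hlpos.le _)]
          rw [Real.rpow_mul hlpos.le]
        rw [hxl, ← ENNReal.ofReal_rpow_of_pos hlpos,
          show -(1/s) * p = -(p/s) by ring]
        rw [ENNReal.rpow_neg, ENNReal.rpow_neg]
        refine ENNReal.inv_le_inv.2 (ENNReal.rpow_le_rpow ?_ (by positivity))
        calc ENNReal.ofReal (l:ℝ) ≤ ENNReal.ofReal (2 ^ ((j:ℝ)+1)) :=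
              ENNReal.ofReal_le_ofReal hub
          _ = (2:ℝ≥0∞) ^ ((j:ℝ)+1) := by
              rw [← ENNReal.ofReal_rpow_of_pos (by norm_num)]
              norm_num
      have hcard : (dyadicI j 1).card = 2 ^ j := by
        simp only [dyadicI, mul_one]
        rw [Int.card_Ico, show (2:ℤ)^j * (1+1) - 2^j = 2^j by ring]
        rw [show ((2:ℤ)^j) = ((2^j:ℕ):ℤ) by push_cast; ring, Int.toNat_natCast]
      have hsum : ((2:ℝ≥0∞) ^ (j:ℝ)) * ((2:ℝ≥0∞) ^ ((j:ℝ)+1)) ^ (-(p/s)) ≤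
          ∑ l ∈ dyadicI j 1, ENNReal.ofReal (|x l| ^ p) := by
        have := Finset.card_nsmul_le_sum (dyadicI j 1)
          (fun l => ENNReal.ofReal (|x l| ^ p)) _ hterm
        rw [hcard, nsmul_eq_mul] at this
        refine le_trans (le_of_eq ?_) this
        congr 1
        rw [ENNReal.rpow_natCast]
        push_cast
        ring
      -- assemble
      have hmain : (2:ℝ≥0∞) ^
          ((j:ℝ) * (r * (1/q - 1/p)) + ((j:ℝ) + ((j:ℝ)+1) * (-(p/s))) * (r/p))
          ≤ f (j, 1) := by
        rw [hf]
        simp only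
        have h1 : ((2:ℝ≥0∞) ^ (j:ℕ)) ^ (r * (1/q - 1/p)) =
            (2:ℝ≥0∞) ^ ((j:ℝ) * (r * (1/q - 1/p))) := by
          rw [← ENNReal.rpow_natCast 2 j, ← ENNReal.rpow_mul]
        rw [h1]
        refine le_trans (le_of_eq ?_)
          (mul_le_mul_right (ENNReal.rpow_le_rpow hsum (by positivity)) _)
        rw [← ENNReal.rpow_mul 2 ((j:ℝ)+1) (-(p/s)), pow_add, ← ENNReal.rpow_mul,
          pow_add]
      refine le_trans (ENNReal.rpow_le_rpow_of_exponent_le one_le_two ?_) hmain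
      have h1 : 1/s ≤ 1/q := one_div_le_one_div_of_le hq0 hqs
      have hj : (0:ℝ) ≤ (j:ℝ) := Nat.cast_nonneg j
      have hEq : (j:ℝ) * (r * (1/q - 1/p)) + ((j:ℝ) + ((j:ℝ)+1) * (-(p/s))) * (r/p)
          = (j:ℝ) * r * (1/q - 1/s) - r/s := by
        field_simp
        ring
      rw [hEq]
      nlinarith [mul_nonneg (mul_nonneg hj hr0.le) (by linarith : (0:ℝ) ≤ 1/q - 1/s)]
    have hinj : Injective (fun j : ℕ => ((j, 1) : ℕ × ℤ)) := by
      intro a b h; simpa using h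
    have htop : (∑' jk : ℕ × ℤ, f jk) = ⊤ := by
      refine top_le_iff.1 ?_
      calc (⊤:ℝ≥0∞) = ∑' _ : ℕ, (2:ℝ≥0∞) ^ (-(r/s)) :=
            (ENNReal.tsum_const_eq_top_of_ne_zero
              (ENNReal.rpow_pos (by norm_num) h2t).ne').symm
        _ ≤ ∑' j : ℕ, f (j, 1) := ENNReal.tsum_le_tsum key
        _ ≤ ∑' jk : ℕ × ℤ, f jk := ENNReal.tsum_comp_le_tsum_of_injective hinj f
    rw [BMnorm, ← hf, htop]
    exact ENNReal.top_rpow_of_pos (by positivity)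
end

section
/- With the convention 1/∞ = 0 and in the case r ≥ p, the dyadic norm ‖x‖_{ℓ^p_{∞,r}} = (∑_{j≥0} ∑_{k∈ℤ} 2^{−jr/p}(∑_{l∈I(j,k)} |x(l)|^p)^{r/p})^{1/r} satisfies ‖x‖_{ℓ^r} ≤ ‖x‖_{ℓ^p_{∞,r}} ≤ 2^{1/r} ‖x‖_{ℓ^r} for every x : ℤ → ℝ. -/
open scoped ENNReal
open Finset Function

/-- The dyadic Bourgain–Morrey norm with `q = ∞` (convention `1/∞ = 0`). -/
noncomputable def BMnormInf (p r : ℝ) (x : ℤ → ℝ) : ℝ≥0∞ :=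
  (∑' jk : ℕ × ℤ,
      ((2 : ℝ≥0∞) ^ jk.1) ^ (-(r / p)) *
        (∑ l ∈ dyadicI jk.1 jk.2, ENNReal.ofReal (|x l| ^ p)) ^ (r / p)) ^ (1 / r)

lemma dyadic_mem_iff (j : ℕ) (k l : ℤ) : l ∈ dyadicI j k ↔ k = l / 2 ^ j := by
  have h2 : (0 : ℤ) < 2 ^ j := by positivity
  simp only [dyadicI, Finset.mem_Ico]
  rw [show ((2:ℤ)^j * k ≤ l ↔ k ≤ l / 2 ^ j) by
        rw [Int.le_ediv_iff_mul_le h2, mul_comm],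
      show (l < (2:ℤ)^j * (k+1) ↔ l / 2 ^ j < k + 1) by
        rw [Int.ediv_lt_iff_lt_mul h2, mul_comm]]
  omega

lemma card_dyadicI (j : ℕ) (k : ℤ) : (dyadicI j k).card = 2 ^ j := by
  simp only [dyadicI, Int.card_Ico]
  have : (2:ℤ)^j * (k+1) - 2^j * k = 2^j := by ring
  rw [this, show ((2:ℤ)^j) = ((2^j : ℕ) : ℤ) by push_cast; ring, Int.toNat_natCast]

lemma tsum_dyadic (j : ℕ) (g : ℤ → ℝ≥0∞) :
    ∑' k : ℤ, ∑ l ∈ dyadicI j k, g l = ∑' l : ℤ, g l := by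
  have h1 : ∀ k : ℤ, ∑ l ∈ dyadicI j k, g l
      = ∑' l : ℤ, if l ∈ dyadicI j k then g l else 0 := by
    intro k
    rw [tsum_eq_sum (s := dyadicI j k) (fun l hl => if_neg hl)]
    exact Finset.sum_congr rfl fun l hl => (if_pos hl).symm
  rw [tsum_congr h1, ENNReal.tsum_comm]
  refine tsum_congr fun l => ?_
  rw [tsum_eq_single (l / 2 ^ j)]
  · exact if_pos ((dyadic_mem_iff j (l / 2^j) l).mpr rfl)
  · intro k hk
    rw [if_neg]
    rw [dyadic_mem_iff]
    exact fun h => hk h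

/-- For `q = ∞` and `r ≥ p`: `‖x‖_{ℓ^r} ≤ ‖x‖_{ℓ^p_{∞,r}} ≤ 2^{1/r} ‖x‖_{ℓ^r}`. -/
theorem BMnormInf_equiv_lr_of_le (p r : ℝ) (hp : 1 ≤ p) (hpr : p ≤ r) (x : ℤ → ℝ) :
    lNorm r x ≤ BMnormInf p r x ∧
    BMnormInf p r x ≤ (2 : ℝ≥0∞) ^ ((1 : ℝ) / r) * lNorm r x := by
  have hp0 : (0:ℝ) < p := lt_of_lt_of_le one_pos hp
  have hr0 : (0:ℝ) < r := lt_of_lt_of_le hp0 hpr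
  have hs1 : (1:ℝ) ≤ r / p := (one_le_div hp0).mpr hpr
  have hs0 : (0:ℝ) ≤ r / p := le_trans zero_le_one hs1
  have hinv : (0:ℝ) ≤ 1 / r := by positivity
  set F : ℕ × ℤ → ℝ≥0∞ := fun jk =>
    ((2 : ℝ≥0∞) ^ jk.1) ^ (-(r / p)) *
      (∑ l ∈ dyadicI jk.1 jk.2, ENNReal.ofReal (|x l| ^ p)) ^ (r / p) with hF
  -- pointwise identity: ofReal (|x l|^p) ^ (r/p) = ofReal (|x l|^r)
  have hpt : ∀ l : ℤ, ENNReal.ofReal (|x l| ^ p) ^ (r / p) = ENNReal.ofReal (|x l| ^ r) := by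
    intro l
    rw [ENNReal.ofReal_rpow_of_nonneg (by positivity) hs0,
      ← Real.rpow_mul (abs_nonneg _), show p * (r / p) = r by field_simp]
  constructor
  · -- lower bound
    rw [lNorm, BMnormInf]
    refine ENNReal.rpow_le_rpow ?_ hinv
    have hinj : Injective (fun k : ℤ => ((0, k) : ℕ × ℤ)) := fun a b h => by
      simpa using h
    calc ∑' k : ℤ, ENNReal.ofReal (|x k| ^ r)
        = ∑' k : ℤ, F (0, k) := by
          refine tsum_congr fun k => ?_
          simp [hF, dyadicI_zero, hpt k]
      _ ≤ ∑' jk : ℕ × ℤ, F jk := ENNReal.tsum_comp_le_tsum_of_injective hinj F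
  · -- upper bound
    rw [lNorm, BMnormInf]
    set T : ℝ≥0∞ := ∑' k : ℤ, ENNReal.ofReal (|x k| ^ r) with hT
    have key : ∑' jk : ℕ × ℤ, F jk ≤ 2 * T := by
      rw [ENNReal.tsum_prod']
      have hjk : ∀ (j : ℕ) (k : ℤ),
          F (j, k) ≤ (2 : ℝ≥0∞) ^ (-(j:ℝ)) *
            ∑ l ∈ dyadicI j k, ENNReal.ofReal (|x l| ^ r) := by
        intro j k
        have hcard : ((dyadicI j k).card : ℝ≥0∞) = (2:ℝ≥0∞) ^ (j:ℝ) := by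
          rw [card_dyadicI]
          push_cast
          rw [ENNReal.rpow_natCast]
        have h1 : (∑ l ∈ dyadicI j k, ENNReal.ofReal (|x l| ^ p)) ^ (r / p)
            ≤ ((2:ℝ≥0∞) ^ (j:ℝ)) ^ (r/p - 1) *
              ∑ l ∈ dyadicI j k, ENNReal.ofReal (|x l| ^ p) ^ (r/p) := by
          rw [← hcard]
          exact ENNReal.rpow_sum_le_const_mul_sum_rpow _ _ hs1
        calc F (j, k) ≤ ((2 : ℝ≥0∞) ^ (j:ℕ)) ^ (-(r / p)) *
              (((2:ℝ≥0∞) ^ (j:ℝ)) ^ (r/p - 1) *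
                ∑ l ∈ dyadicI j k, ENNReal.ofReal (|x l| ^ p) ^ (r/p)) :=
            mul_le_mul_right h1 _
          _ = (2 : ℝ≥0∞) ^ (-(j:ℝ)) * ∑ l ∈ dyadicI j k, ENNReal.ofReal (|x l| ^ r) := by
            rw [← ENNReal.rpow_natCast (2:ℝ≥0∞) j, ← ENNReal.rpow_mul, ← ENNReal.rpow_mul,
              ← mul_assoc, ← ENNReal.rpow_add _ _ (by norm_num) (by norm_num)]
            congr 1
            · congr 1
              ring
            · exact Finset.sum_congr rfl fun l _ => hpt l
      calc ∑' (j : ℕ) (k : ℤ), F (j, k)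
          ≤ ∑' (j : ℕ) (k : ℤ), (2 : ℝ≥0∞) ^ (-(j:ℝ)) *
              ∑ l ∈ dyadicI j k, ENNReal.ofReal (|x l| ^ r) :=
            ENNReal.tsum_le_tsum fun j => ENNReal.tsum_le_tsum fun k => hjk j k
        _ = ∑' (j : ℕ), (2 : ℝ≥0∞) ^ (-(j:ℝ)) * T := by
            refine tsum_congr fun j => ?_
            rw [ENNReal.tsum_mul_left, tsum_dyadic j fun l => ENNReal.ofReal (|x l| ^ r)]
        _ = (∑' (j : ℕ), (2 : ℝ≥0∞) ^ (-(j:ℝ))) * T := by rw [ENNReal.tsum_mul_right]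
        _ = 2 * T := by
            congr 1
            have : ∀ j : ℕ, (2 : ℝ≥0∞) ^ (-(j:ℝ)) = (2⁻¹ : ℝ≥0∞) ^ j := by
              intro j
              rw [ENNReal.rpow_neg, ← ENNReal.rpow_natCast, ← ENNReal.inv_rpow,
                ENNReal.rpow_natCast]
            rw [tsum_congr this, ENNReal.tsum_geometric, ENNReal.one_sub_inv_two, inv_inv]
    calc (∑' jk : ℕ × ℤ, F jk) ^ (1/r) ≤ (2 * T) ^ (1/r) :=
          ENNReal.rpow_le_rpow key hinv
      _ = (2:ℝ≥0∞) ^ ((1:ℝ)/r) * T ^ (1/r) := ENNReal.mul_rpow_of_nonneg _ _ hinv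
end

section
/- For every x ∈ ℓ^p_{q,r}(ℤ) and y ∈ h^{p'}_{q',r'}(ℤ), the pairing ∑_{m∈ℤ} x(m)y(m) converges absolutely and satisfies |∑_m x(m)y(m)| ≤ ‖x‖_{ℓ^p_{q,r}} ‖y‖_{h^{p'}_{q',r'}}. -/
open scoped ENNReal
open Finset Function

noncomputable section

/-- A `(q',p')`-block relative to the dyadic interval `I(j,k)`: a sequence supported
in `I(j,k)` whose `ℓ^{p'}` norm is at most `|I(j,k)|^{1/p' - 1/q'}`. -/
def IsBlock (p' q' : ℝ) (j : ℕ) (k : ℤ) (a : ℤ → ℝ) : Prop :=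
  (∀ n : ℤ, n ∉ dyadicI j k → a n = 0) ∧
    (∑ l ∈ dyadicI j k, |a l| ^ p') ^ (1 / p') ≤ ((2 : ℝ) ^ j) ^ (1 / p' - 1 / q')

/-- The block space norm `‖y‖_{h^{p'}_{q',r'}}`: the infimum of `‖λ‖_{ℓ^{r'}}` over all
representations `y = ∑_{(j,k)} λ_k^j a_k^j` (pointwise convergence) with each `a_k^j`
a `(q',p')`-block on `I(j,k)`. -/
def blockNorm (p' q' r' : ℝ) (y : ℤ → ℝ) : ℝ≥0∞ :=
  ⨅ (lam : ℕ × ℤ → ℝ) (a : ℕ × ℤ → ℤ → ℝ)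
    (_ : ∀ jk : ℕ × ℤ, IsBlock p' q' jk.1 jk.2 (a jk))
    (_ : ∀ n : ℤ, HasSum (fun jk : ℕ × ℤ => lam jk * a jk n) (y n)),
    (∑' jk : ℕ × ℤ, ENNReal.ofReal (|lam jk| ^ r')) ^ (1 / r')

end

/-!
Split `y` into blocks. Against a single `(q',p')`-block on `I(j,k)`, Hölder's inequality on the
finite interval bounds the pairing by `|I(j,k)|^{1/q - 1/p} ‖x‖_{ℓ^p(I(j,k))}`, which is exactly the
`(j,k)` summand of the Bourgain–Morrey norm before taking the `r`-th power. Hölder's inequality in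
`(j,k)` with exponents `r'`, `r` then bounds the whole pairing by `‖λ‖_{ℓ^{r'}} ‖x‖_{ℓ^p_{q,r}}`,
and taking the infimum over representations gives the block norm. Absolute convergence comes for
free, since all estimates are made on `∑ |x(m) y(m)|` in `ℝ≥0∞`.
-/

lemma Real.HolderConjugate.of_one_div_add_one_div {p q : ℝ} (hp : 1 < p)
    (h : 1 / p + 1 / q = 1) : p.HolderConjugate q :=
  Real.holderConjugate_iff.mpr ⟨hp, by simpa only [one_div] using h⟩

lemma ENNReal.tsum_mul_le_Lp_mul_Lq {ι : Type*} {p q : ℝ} (hpq : p.HolderConjugate q)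
    (f g : ι → ℝ≥0∞) :
    ∑' i, f i * g i ≤ (∑' i, f i ^ p) ^ (1 / p) * (∑' i, g i ^ q) ^ (1 / q) := by
  rw [ENNReal.tsum_eq_iSup_sum]
  refine iSup_le fun s => (ENNReal.inner_le_Lp_mul_Lq s f g hpq).trans ?_
  exact mul_le_mul'
    (ENNReal.rpow_le_rpow (ENNReal.sum_le_tsum s) hpq.one_div_nonneg)
    (ENNReal.rpow_le_rpow (ENNReal.sum_le_tsum s) hpq.symm.one_div_nonneg)

lemma ENNReal.ofReal_abs_tsum_le {ι : Type*} (f : ι → ℝ) :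
    ENNReal.ofReal |∑' i, f i| ≤ ∑' i, ENNReal.ofReal |f i| := by
  simpa only [Real.enorm_eq_ofReal_abs] using enorm_tsum_le_tsum_enorm (f := f)

lemma tsum_ofReal_abs_mul_le_of_isBlock {p p' q' : ℝ} (hpp' : p.HolderConjugate p') {j : ℕ}
    {k : ℤ} {a : ℤ → ℝ} (ha : IsBlock p' q' j k a) (x : ℤ → ℝ) :
    ∑' m, ENNReal.ofReal (|x m| * |a m|) ≤
      ((2 : ℝ≥0∞) ^ j) ^ (1 / p' - 1 / q') *
        (∑ l ∈ dyadicI j k, ENNReal.ofReal (|x l| ^ p)) ^ (1 / p) := by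
  have hreal : ∑ l ∈ dyadicI j k, |x l| * |a l| ≤
      ((2 : ℝ) ^ j) ^ (1 / p' - 1 / q') * (∑ l ∈ dyadicI j k, |x l| ^ p) ^ (1 / p) := by
    have holder := Real.inner_le_Lp_mul_Lq (dyadicI j k) (|x ·|) (|a ·|) hpp'
    simp only [abs_abs] at holder
    rw [mul_comm]
    exact holder.trans (mul_le_mul_of_nonneg_left ha.2 (by positivity))
  rw [tsum_eq_sum (s := dyadicI j k) fun m hm => by simp [ha.1 m hm],
    ← ENNReal.ofReal_sum_of_nonneg fun _ _ => by positivity]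
  refine (ENNReal.ofReal_le_ofReal hreal).trans_eq ?_
  rw [ENNReal.ofReal_mul (by positivity), ← ENNReal.ofReal_rpow_of_pos (by positivity),
    ENNReal.ofReal_pow zero_le_two, ENNReal.ofReal_ofNat,
    ← ENNReal.ofReal_rpow_of_nonneg (by positivity) hpp'.one_div_nonneg,
    ENNReal.ofReal_sum_of_nonneg fun _ _ => by positivity]

lemma tsum_ofReal_abs_mul_le_BMnorm_mul {p q r p' q' r' : ℝ} (hpp' : p.HolderConjugate p')
    (hq' : 1 / q + 1 / q' = 1) (hrr' : r.HolderConjugate r') (x y : ℤ → ℝ)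
    (lam : ℕ × ℤ → ℝ) (a : ℕ × ℤ → ℤ → ℝ) (hb : ∀ jk : ℕ × ℤ, IsBlock p' q' jk.1 jk.2 (a jk))
    (hs : ∀ n : ℤ, HasSum (fun jk : ℕ × ℤ => lam jk * a jk n) (y n)) :
    ∑' m, ENNReal.ofReal |x m * y m| ≤
      BMnorm p q r x * (∑' jk : ℕ × ℤ, ENNReal.ofReal (|lam jk| ^ r')) ^ (1 / r') := by
  have hexp : 1 / p' - 1 / q' = 1 / q - 1 / p := by linarith [hpp'.one_div_add_one_div]
  set A : ℕ × ℤ → ℝ≥0∞ := fun jk => ((2 : ℝ≥0∞) ^ jk.1) ^ (1 / q - 1 / p) *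
    (∑ l ∈ dyadicI jk.1 jk.2, ENNReal.ofReal (|x l| ^ p)) ^ (1 / p)
  have hA : BMnorm p q r x = (∑' jk, A jk ^ r) ^ (1 / r) := by
    refine congrArg (· ^ (1 / r)) (tsum_congr fun jk => ?_)
    rw [ENNReal.mul_rpow_of_nonneg _ _ hrr'.nonneg, ← ENNReal.rpow_mul, ← ENNReal.rpow_mul]
    ring_nf
  have hy : ∀ m, ENNReal.ofReal |y m| ≤ ∑' jk, ENNReal.ofReal |lam jk| * ENNReal.ofReal |a jk m| :=
    fun m => by
      simpa only [(hs m).tsum_eq, abs_mul, ENNReal.ofReal_mul (abs_nonneg _)]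
        using ENNReal.ofReal_abs_tsum_le fun jk => lam jk * a jk m
  calc ∑' m, ENNReal.ofReal |x m * y m|
      ≤ ∑' m, ENNReal.ofReal |x m| *
          ∑' jk, ENNReal.ofReal |lam jk| * ENNReal.ofReal |a jk m| := by
        simp only [abs_mul, ENNReal.ofReal_mul (abs_nonneg _)]
        gcongr with m
        exact hy m
    _ = ∑' jk, ENNReal.ofReal |lam jk| * ∑' m, ENNReal.ofReal (|x m| * |a jk m|) := by
        simp only [← ENNReal.tsum_mul_left, ENNReal.ofReal_mul (abs_nonneg _)]
        rw [ENNReal.tsum_comm]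
        exact tsum_congr fun jk => tsum_congr fun m => by ring
    _ ≤ ∑' jk, ENNReal.ofReal |lam jk| * A jk := by
        gcongr with jk
        simpa only [A, hexp] using tsum_ofReal_abs_mul_le_of_isBlock hpp' (hb jk) x
    _ ≤ (∑' jk, ENNReal.ofReal |lam jk| ^ r') ^ (1 / r') * (∑' jk, A jk ^ r) ^ (1 / r) :=
        ENNReal.tsum_mul_le_Lp_mul_Lq hrr'.symm _ _
    _ = BMnorm p q r x * (∑' jk, ENNReal.ofReal (|lam jk| ^ r')) ^ (1 / r') := by
        simp only [hA, ENNReal.ofReal_rpow_of_nonneg (abs_nonneg _) hrr'.symm.nonneg, mul_comm]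

lemma exists_blockRep_lt_of_blockNorm_lt {p' q' r' : ℝ} {y : ℤ → ℝ} {c : ℝ≥0∞}
    (h : blockNorm p' q' r' y < c) :
    ∃ (lam : ℕ × ℤ → ℝ) (a : ℕ × ℤ → ℤ → ℝ),
      (∀ jk : ℕ × ℤ, IsBlock p' q' jk.1 jk.2 (a jk)) ∧
      (∀ n : ℤ, HasSum (fun jk : ℕ × ℤ => lam jk * a jk n) (y n)) ∧
      (∑' jk : ℕ × ℤ, ENNReal.ofReal (|lam jk| ^ r')) ^ (1 / r') < c := by
  simpa only [blockNorm, iInf_lt_iff, exists_prop] using h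

lemma le_mul_blockNorm {p' q' r' : ℝ} {y : ℤ → ℝ} {s c : ℝ≥0∞} (hc : c ≠ ⊤)
    (hy : blockNorm p' q' r' y ≠ ⊤)
    (h : ∀ (lam : ℕ × ℤ → ℝ) (a : ℕ × ℤ → ℤ → ℝ),
      (∀ jk : ℕ × ℤ, IsBlock p' q' jk.1 jk.2 (a jk)) →
      (∀ n : ℤ, HasSum (fun jk : ℕ × ℤ => lam jk * a jk n) (y n)) →
      s ≤ c * (∑' jk : ℕ × ℤ, ENNReal.ofReal (|lam jk| ^ r')) ^ (1 / r')) :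
    s ≤ c * blockNorm p' q' r' y := by
  rcases eq_or_ne c 0 with rfl | hc0
  · obtain ⟨lam, a, hb, hs, -⟩ := exists_blockRep_lt_of_blockNorm_lt hy.lt_top
    simpa using h lam a hb hs
  · simp only [blockNorm, ENNReal.mul_iInf_of_ne hc0 hc]
    exact le_iInf fun lam => le_iInf fun a => le_iInf fun hb => le_iInf (h lam a hb)

theorem BM_block_pairing_general (p q r p' q' r' : ℝ) (hp : 1 < p)
    (hr : 1 < r) (hp' : 1 / p + 1 / p' = 1) (hq' : 1 / q + 1 / q' = 1)
    (hr' : 1 / r + 1 / r' = 1) (x y : ℤ → ℝ)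
    (hx : BMnorm p q r x ≠ ⊤) (hy : blockNorm p' q' r' y ≠ ⊤) :
    Summable (fun m : ℤ => |x m * y m|) ∧
    ENNReal.ofReal |∑' m : ℤ, x m * y m| ≤
      BMnorm p q r x * blockNorm p' q' r' y := by
  have hpp' := Real.HolderConjugate.of_one_div_add_one_div hp hp'
  have hrr' := Real.HolderConjugate.of_one_div_add_one_div hr hr'
  have hbound := tsum_ofReal_abs_mul_le_BMnorm_mul hpp' hq' hrr' x y
  obtain ⟨lam, a, hb, hs, hlam⟩ := exists_blockRep_lt_of_blockNorm_lt hy.lt_top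
  have hfin : ∑' m, ENNReal.ofReal |x m * y m| ≠ ⊤ :=
    ne_top_of_le_ne_top (ENNReal.mul_ne_top hx hlam.ne) (hbound lam a hb hs)
  refine ⟨?_, (ENNReal.ofReal_abs_tsum_le _).trans (le_mul_blockNorm hx hy hbound)⟩
  simp only [← Real.enorm_eq_ofReal_abs] at hfin
  simpa only [Real.norm_eq_abs] using tsum_enorm_ne_top_iff_summable_norm.mp hfin

/-- The pairing between `ℓ^p_{q,r}` and the block space `h^{p'}_{q',r'}` converges
absolutely and satisfies `|∑ x(m)y(m)| ≤ ‖x‖_{ℓ^p_{q,r}} ‖y‖_{h^{p'}_{q',r'}}`. -/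
theorem BM_block_pairing (p q r p' q' r' : ℝ) (hp : 1 < p) (hpq : p < q)
    (hr : 1 < r) (hp' : 1 / p + 1 / p' = 1) (hq' : 1 / q + 1 / q' = 1)
    (hr' : 1 / r + 1 / r' = 1) (x y : ℤ → ℝ)
    (hx : BMnorm p q r x ≠ ⊤) (hy : blockNorm p' q' r' y ≠ ⊤) :
    Summable (fun m : ℤ => |x m * y m|) ∧
    ENNReal.ofReal |∑' m : ℤ, x m * y m| ≤
      BMnorm p q r x * blockNorm p' q' r' y :=
  BM_block_pairing_general p q r p' q' r' hp hr hp' hq' hr' x y hx hy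
end
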